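/- arXiv:2312.10846 — 2 statements merged into one kernel-verified Lean document; each statement's English description precedes it below -/
import Mathlib

section
/- Let (X, X) and (Y, Y) be continuous biframe Bessel mappings for H with Bessel bounds D₁ and D₂ respectively, and let m : Ω → ℂ be an essentially bounded measurable function. Then the adjoint of the continuous biframe Bessel multiplier M_{m,X,Y} is M_{m̄,Y,X}; that is, ⟨M_{m,X,Y} f, g⟩ = ⟨f, M_{m̄,Y,X} g⟩ for all f, g ∈ H, where m̄ denotes the complex conjugate of m. -/
open MeasureTheory

set_option linter.unusedSectionVars false

section Aux
variable {𝒜 : Type*}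
    [NormedRing 𝒜] [StarRing 𝒜] [CStarRing 𝒜] [NormedAlgebra ℂ 𝒜] [CompleteSpace 𝒜]
    [PartialOrder 𝒜] [StarOrderedRing 𝒜]

omit [CompleteSpace 𝒜] [PartialOrder 𝒜] [StarOrderedRing 𝒜] in
lemma star_real_smul' (r : ℝ) (a : 𝒜) : star (r • a) = r • star a :=
  map_real_smul (starAddEquiv (R := 𝒜)) continuous_star r a

omit [CompleteSpace 𝒜] in
lemma star_I_one : star (Complex.I • (1 : 𝒜)) = -(Complex.I • (1 : 𝒜)) := by
  have hcomm : ∀ a : 𝒜, (Complex.I • (1 : 𝒜)) * a = a * (Complex.I • (1 : 𝒜)) := fun a => by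
    rw [smul_mul_assoc, mul_smul_comm, one_mul, mul_one]
  generalize hu' : Complex.I • (1 : 𝒜) = u at *
  have hu2 : u * u = -1 := by
    rw [← hu', smul_mul_assoc, one_mul, smul_smul, Complex.I_mul_I, neg_smul, one_smul]
  have hw2 : star u * star u = -1 := by
    rw [← star_mul, hu2, star_neg, star_one]
  have hcw : u * star u = star u * u := hcomm (star u)
  have htt : (u + star u) * (u + star u) = u * star u + u * star u - 1 - 1 := by
    rw [add_mul, mul_add, mul_add, hu2, hw2, ← hcw]; abel
  have h1 : (0 : 𝒜) ≤ u * star u + u * star u - 1 - 1 := by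
    have := star_mul_self_nonneg (u + star u)
    rwa [star_add, star_star, add_comm (star u) u, htt] at this
  have hss : (u * star u) * (u * star u) = 1 := by
    calc u * star u * (u * star u) = u * (star u * u) * star u := by noncomm_ring
      _ = u * (u * star u) * star u := by rw [hcw]
      _ = (u * u) * (star u * star u) := by noncomm_ring
      _ = 1 := by rw [hu2, hw2]; simp
  have h2 : (0 : 𝒜) ≤ -(u * star u + u * star u - 1 - 1) := by
    have h := star_mul_self_nonneg (u * star u - 1)
    have hstars : star (u * star u) = u * star u := by rw [star_mul, star_star]
    have hcalc : star (u * star u - 1) * (u * star u - 1)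
        = -(u * star u + u * star u - 1 - 1) := by
      rw [star_sub, hstars, star_one, sub_mul, mul_sub, mul_sub, hss, mul_one, one_mul]
      noncomm_ring
    rwa [hcalc] at h
  have h0 : u * star u + u * star u - 1 - 1 = 0 := le_antisymm (neg_nonneg.mp h2) h1
  have h2s : (2 : ℝ) • (u * star u - 1) = 0 := by
    rw [two_smul, ← h0]; abel
  have hs1 : u * star u = 1 := by
    have h3 := congrArg (fun x => (2 : ℝ)⁻¹ • x) h2s
    simp only [smul_smul, smul_zero] at h3
    norm_num at h3
    exact sub_eq_zero.mp h3
  have h4 : u * (u * star u) = u := by rw [hs1, mul_one]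
  rw [← mul_assoc, hu2, neg_one_mul] at h4
  exact neg_eq_iff_eq_neg.mp h4

omit [CompleteSpace 𝒜] in
lemma star_complex_smul (c : ℂ) (a : 𝒜) :
    star (c • a) = (starRingEnd ℂ) c • star a := by
  have hI : ∀ b : 𝒜, star (Complex.I • b) = -(Complex.I • star b) := by
    intro b
    have h1 : Complex.I • b = (Complex.I • (1 : 𝒜)) * b := by
      rw [smul_mul_assoc, one_mul]
    rw [h1, star_mul, star_I_one, mul_neg, mul_smul_comm, mul_one]
  have hdec : c • a = (c.re : ℝ) • a + (c.im : ℝ) • (Complex.I • a) := by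
    rw [← Complex.coe_smul, ← Complex.coe_smul, smul_smul, ← add_smul]
    congr 1
    exact (Complex.re_add_im c).symm
  have hdec' : (starRingEnd ℂ) c • star a
      = (c.re : ℝ) • star a + (-c.im : ℝ) • (Complex.I • star a) := by
    rw [← Complex.coe_smul, ← Complex.coe_smul, smul_smul, ← add_smul]
    congr 1
    apply Complex.ext <;> simp
  rw [hdec, star_add, star_real_smul', star_real_smul', hI, hdec']
  module

end Aux

/-- The adjoint of the continuous biframe Bessel multiplier `M_{m,X,Y}`
is `M_{m̄,Y,X}`. -/
theorem bessel_multiplier_adjoint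
    {𝒜 H Ω : Type*}
    -- `𝒜` is a unital C*-algebra
    [NormedRing 𝒜] [StarRing 𝒜] [CStarRing 𝒜] [NormedAlgebra ℂ 𝒜] [CompleteSpace 𝒜]
    [PartialOrder 𝒜] [StarOrderedRing 𝒜]
    -- `H` is a Hilbert C*-module over `𝒜`
    [NormedAddCommGroup H] [NormedSpace ℝ H] [CompleteSpace H] [Module 𝒜 H]
    (inn : H → H → 𝒜)
    (inn_add_left : ∀ x y z : H, inn (x + y) z = inn x z + inn y z)
    (inn_smul_left : ∀ (a : 𝒜) (x z : H), inn (a • x) z = a * inn x z)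
    (inn_conj_symm : ∀ x y : H, inn x y = star (inn y x))
    (inn_nonneg : ∀ x : H, 0 ≤ inn x x)
    (inn_definite : ∀ x : H, inn x x = 0 → x = 0)
    (hnorm : ∀ x : H, ‖x‖ = Real.sqrt ‖inn x x‖)
    -- `(Ω, μ)` is a measure space
    [MeasurableSpace Ω] (μ : Measure Ω)
    -- `X, Y : Ω → H` are weakly measurable
    (X Y : Ω → H)
    (hXw : ∀ f : H, AEStronglyMeasurable (fun ω => inn f (X ω)) μ)
    (hYw : ∀ f : H, AEStronglyMeasurable (fun ω => inn f (Y ω)) μ)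
    -- `(X, X)` and `(Y, Y)` are continuous biframe Bessel mappings with bounds `D₁, D₂`
    (D₁ D₂ : ℝ) (hD₁ : 0 < D₁) (hD₂ : 0 < D₂)
    (hXBessel : ∀ f : H, ∫ ω, inn f (X ω) * inn (X ω) f ∂μ ≤ D₁ • inn f f)
    (hYBessel : ∀ f : H, ∫ ω, inn f (Y ω) * inn (Y ω) f ∂μ ≤ D₂ • inn f f)
    -- `m : Ω → ℂ` is an essentially bounded measurable function
    (m : Ω → ℂ) (hm : AEStronglyMeasurable m μ) (hmbd : eLpNormEssSup m μ ≠ ⊤)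
    -- all relevant integrands are Bochner integrable
    (hprodX : ∀ f : H, Integrable (fun ω => inn f (X ω) * inn (X ω) f) μ)
    (hprodY : ∀ f : H, Integrable (fun ω => inn f (Y ω) * inn (Y ω) f) μ)
    (hmint : ∀ f g : H, Integrable (fun ω => m ω • (inn f (X ω) * inn (Y ω) g)) μ)
    (hmint' : ∀ f g : H,
      Integrable (fun ω => (starRingEnd ℂ) (m ω) • (inn f (Y ω) * inn (X ω) g)) μ)
    -- the continuous biframe Bessel multipliers `M_{m,X,Y}` and `M_{m̄,Y,X}` (weakly defined)
    (M M' : H → H)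
    (hM : ∀ f g : H, inn (M f) g = ∫ ω, m ω • (inn f (X ω) * inn (Y ω) g) ∂μ)
    (hM' : ∀ f g : H,
      inn (M' f) g = ∫ ω, (starRingEnd ℂ) (m ω) • (inn f (Y ω) * inn (X ω) g) ∂μ) :
    ∀ f g : H, inn (M f) g = inn f (M' g) := by
  intro f g
  let Φ : 𝒜 →L[ℝ] 𝒜 :=
    (starAddEquiv (R := 𝒜)).toAddMonoidHom.toRealLinearMap continuous_star
  have hΦ : ∀ x : 𝒜, Φ x = star x := fun x => rfl
  have key : ∀ ω, star ((starRingEnd ℂ) (m ω) • (inn g (Y ω) * inn (X ω) f))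
      = m ω • (inn f (X ω) * inn (Y ω) g) := by
    intro ω
    rw [star_complex_smul, Complex.conj_conj, star_mul]
    rw [← inn_conj_symm f (X ω), ← inn_conj_symm (Y ω) g]
  have hfun : (fun ω => Φ ((starRingEnd ℂ) (m ω) • (inn g (Y ω) * inn (X ω) f)))
      = fun ω => m ω • (inn f (X ω) * inn (Y ω) g) := funext fun ω => by
    rw [hΦ]; exact key ω
  rw [hM f g, inn_conj_symm f (M' g), hM' g f, ← hΦ,
    ← ContinuousLinearMap.integral_comp_comm Φ (hmint' g f), hfun]
end

section
/- Let (X, X) and (Y, Y) be continuous biframe Bessel mappings for H with Bessel bounds D₁ and D₂ respectively, and let m : Ω → ℂ be an essentially bounded measurable function. Then for every f ∈ H, ‖M_{m,X,Y} f‖ ≤ ‖m‖_∞·√D₂·‖∫_Ω ⟨f, X(ω)⟩⟨X(ω), f⟩ dμ(ω)‖^{1/2}. -/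
/-!
Put `a ω = m ω • ⟨f, X ω⟩` and `b ω = ⟨M f, Y ω⟩`, so that `⟨M f, M f⟩ = ∫ a b*`. The
Cauchy–Schwarz inequality `‖∫ a b*‖² ≤ ‖∫ a a*‖ ‖∫ b b*‖` for `𝒜`-valued integrals, the pointwise
bound `a a* ≤ ‖m‖²_∞ ⟨f, X⟩⟨X, f⟩` and the Bessel bound `∫ b b* ≤ D₂ ⟨M f, M f⟩` give
`‖M f‖⁴ ≤ ‖m‖²_∞ D₂ ‖∫ ⟨f, X⟩⟨X, f⟩‖ ‖M f‖²`.
-/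

open MeasureTheory Filter Topology ComplexConjugate

section StarModule

variable {𝒜 : Type*} [NormedRing 𝒜] [StarRing 𝒜] [CStarRing 𝒜] [NormedAlgebra ℂ 𝒜]
  [PartialOrder 𝒜] [StarOrderedRing 𝒜]

/- Forced by the order (without it, `ℂ` with the trivial involution is a counterexample):
`u = i • 1` commutes with `v = star u` and `u² = -1`, so `(u + v)² + (u v - 1)² = 0` is a sum of
squares of self-adjoint elements. -/
theorem star_I_smul_one : star (Complex.I • (1 : 𝒜)) = -(Complex.I • 1) := by
  set u : 𝒜 := Complex.I • 1
  have hu : u * u = -1 := by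
    rw [smul_mul_smul_comm, Complex.I_mul_I, one_mul, neg_smul, one_smul]
  have hcomm : star u * u = u * star u := by
    simp only [u, smul_mul_assoc, one_mul, mul_smul_comm, mul_one]
  have hsum : (u + star u) * (u + star u) + (u * star u - 1) * (u * star u - 1) = 0 := by
    calc _ = (u * u + 1) * (star u * star u + 1) + (star u * u - u * star u)
          + u * (star u * u - u * star u) * star u := by noncomm_ring
      _ = 0 := by rw [hu, hcomm, sub_self]; simp
  have hsq_nonneg : ∀ x : 𝒜, star x = x → 0 ≤ x * x := fun x hx => by
    simpa only [hx] using star_mul_self_nonneg x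
  have hs : (u + star u) * (u + star u) = 0 :=
    ((add_eq_zero_iff_of_nonneg (hsq_nonneg _ (by rw [star_add, star_star, add_comm]))
      (hsq_nonneg _ (by rw [star_sub, star_mul, star_star, star_one]))).mp hsum).1
  have hs' : star (u + star u) * (u + star u) = 0 := by rwa [star_add, star_star, add_comm]
  exact eq_neg_of_add_eq_zero_right ((CStarRing.star_mul_self_eq_zero_iff _).mp hs')

theorem star_complex_smul_one (z : ℂ) : star (z • (1 : 𝒜)) = conj z • 1 := by
  have hdecomp : ∀ w : ℂ, w • (1 : 𝒜) = w.re • 1 + w.im • (Complex.I • 1) := fun w => by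
    conv_lhs => rw [← Complex.re_add_im w]
    rw [add_smul, mul_smul, Complex.coe_smul, Complex.coe_smul]
  have hreal : ∀ (r : ℝ) (a : 𝒜), star (r • a) = r • star a :=
    map_real_smul (starAddEquiv : 𝒜 ≃+ 𝒜) continuous_star
  rw [hdecomp z, hdecomp (conj z), star_add, hreal, hreal, star_one, star_I_smul_one,
    Complex.conj_re, Complex.conj_im, neg_smul, smul_neg]

theorem starModule_complex_of_starOrderedRing : StarModule ℂ 𝒜 where
  star_smul z a := by
    rw [← one_mul a, ← smul_mul_assoc, star_mul, star_complex_smul_one, mul_smul_comm, mul_one,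
      one_mul]
    rfl

noncomputable abbrev CStarAlgebra.ofStarOrderedRing [CompleteSpace 𝒜] : CStarAlgebra 𝒜 :=
  letI := (starModule_complex_of_starOrderedRing : StarModule ℂ 𝒜)
  { }

end StarModule

theorem MeasureTheory.Integrable.star {E Ω : Type*} [NormedAddCommGroup E] [StarAddMonoid E]
    [NormedStarGroup E] [MeasurableSpace Ω] {μ : Measure Ω} {f : Ω → E} (hf : Integrable f μ) :
    Integrable (fun ω => star (f ω)) μ :=
  hf.norm.mono' hf.aestronglyMeasurable.star (ae_of_all _ fun ω => (norm_star (f ω)).le)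

theorem ae_norm_le_toReal_eLpNormEssSup {E Ω : Type*} [NormedAddCommGroup E] [MeasurableSpace Ω]
    {μ : Measure Ω} {f : Ω → E} (hf : eLpNormEssSup f μ ≠ ⊤) :
    ∀ᵐ ω ∂μ, ‖f ω‖ ≤ (eLpNormEssSup f μ).toReal :=
  (enorm_ae_le_eLpNormEssSup f μ).mono fun _ h => by simpa using ENNReal.toReal_mono hf h

section CStarAlgebra

variable {A : Type*} [CStarAlgebra A] {Ω : Type*} [MeasurableSpace Ω] {μ : Measure Ω}

theorem smul_mul_star_smul (z : ℂ) (a : A) :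
    (z • a) * star (z • a) = (‖z‖ ^ 2) • (a * star a) := by
  rw [star_smul, smul_mul_smul_comm, Complex.star_def, Complex.mul_conj', ← Complex.ofReal_pow,
    Complex.coe_smul]

theorem integral_star (f : Ω → A) : ∫ ω, star (f ω) ∂μ = star (∫ ω, f ω ∂μ) :=
  (starL' ℝ : A ≃L[ℝ] A).integral_comp_comm f

theorem integrable_smul_mul_star_smul {m : Ω → ℂ} {x : Ω → A} {K : ℝ}
    (hm : AEStronglyMeasurable m μ) (hK : ∀ᵐ ω ∂μ, ‖m ω‖ ≤ K)
    (hx : Integrable (fun ω => x ω * star (x ω)) μ) :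
    Integrable (fun ω => (m ω • x ω) * star (m ω • x ω)) μ := by
  have hbdd : Integrable (fun ω => (‖m ω‖ ^ 2) • (x ω * star (x ω))) μ :=
    hx.bdd_smul (𝕜 := ℝ) (K ^ 2) (hm.norm.pow 2) (hK.mono fun ω hω => by
      rw [Real.norm_of_nonneg (by positivity)]
      exact pow_le_pow_left₀ (norm_nonneg _) hω 2)
  exact hbdd.congr (ae_of_all _ fun ω => (smul_mul_star_smul _ _).symm)

variable [PartialOrder A] [StarOrderedRing A]

theorem norm_le_mul_norm_of_le_smul {a b : A} {D : ℝ} (ha : 0 ≤ a) (hD : 0 ≤ D)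
    (h : a ≤ D • b) : ‖a‖ ≤ D * ‖b‖ :=
  (CStarAlgebra.norm_le_norm_of_nonneg_of_le ha h).trans_eq
    (by rw [norm_smul, Real.norm_of_nonneg hD])

theorem norm_sq_le_of_forall_quadratic_nonneg {a b c : A} (hb : IsSelfAdjoint b)
    (h : ∀ t : ℝ, 0 ≤ (t * t) • a - t • (c * star c) - t • (c * star c) + c * b * star c) :
    ‖c‖ ^ 2 ≤ ‖a‖ * ‖b‖ := by
  have key : ∀ t > ‖b‖, ‖c‖ ^ 2 ≤ t * ‖a‖ := fun t ht => by
    have htpos : 0 < t := (norm_nonneg b).trans_lt ht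
    have hcbc : c * b * star c ≤ t • (c * star c) :=
      (CStarAlgebra.star_right_conjugate_le_norm_smul hb).trans
        (smul_le_smul_of_nonneg_right ht.le (mul_star_self_nonneg c))
    have hle : t • (c * star c) ≤ t • (t • a) := by
      have := (h t).trans (add_le_add_right hcbc _)
      rwa [sub_add_cancel, sub_nonneg, ← smul_smul] at this
    have hcc : c * star c ≤ t • a := (smul_le_smul_iff_of_pos_left htpos).mp hle
    calc ‖c‖ ^ 2 = ‖c * star c‖ := by rw [sq, CStarRing.norm_self_mul_star]
      _ ≤ t * ‖a‖ := norm_le_mul_norm_of_le_smul (mul_star_self_nonneg c) htpos.le hcc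
  have hlim : Tendsto (fun t => t * ‖a‖) (𝓝[>] ‖b‖) (𝓝 (‖b‖ * ‖a‖)) :=
    ((continuous_mul_const ‖a‖).tendsto _).mono_left nhdsWithin_le_nhds
  rw [mul_comm]
  exact ge_of_tendsto hlim (eventually_nhdsWithin_of_forall key)

theorem norm_integral_mul_star_sq_le {f g : Ω → A}
    (hfg : Integrable (fun ω => f ω * star (g ω)) μ)
    (hff : Integrable (fun ω => f ω * star (f ω)) μ)
    (hgg : Integrable (fun ω => g ω * star (g ω)) μ) :
    ‖∫ ω, f ω * star (g ω) ∂μ‖ ^ 2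
      ≤ ‖∫ ω, f ω * star (f ω) ∂μ‖ * ‖∫ ω, g ω * star (g ω) ∂μ‖ := by
  set c := ∫ ω, f ω * star (g ω) ∂μ
  refine norm_sq_le_of_forall_quadratic_nonneg
    (integral_nonneg fun ω => mul_star_self_nonneg (g ω)).isSelfAdjoint fun t => ?_
  have hgf : Integrable (fun ω => g ω * star (f ω)) μ := by
    simpa only [star_mul, star_star] using hfg.star
  have hgf_eq : ∫ ω, g ω * star (f ω) ∂μ = star c := by
    rw [← integral_star]
    simp only [star_mul, star_star]
  have hexpand : ∀ ω, (t • f ω - c * g ω) * star (t • f ω - c * g ω)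
      = (t * t) • (f ω * star (f ω)) - t • (f ω * star (g ω) * star c)
        - t • (c * (g ω * star (f ω))) + c * (g ω * star (g ω)) * star c := fun ω => by
    simp only [star_sub, star_smul, star_trivial, star_mul, sub_mul, mul_sub, smul_sub, smul_smul,
      smul_mul_assoc, mul_smul_comm, mul_assoc]
    abel
  have h₁ : Integrable (fun ω => (t * t) • (f ω * star (f ω))) μ := hff.smul _
  have h₂ : Integrable (fun ω => t • (f ω * star (g ω) * star c)) μ := (hfg.mul_const _).smul _
  have h₃ : Integrable (fun ω => t • (c * (g ω * star (f ω)))) μ := (hgf.const_mul _).smul _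
  have h₄ : Integrable (fun ω => c * (g ω * star (g ω)) * star c) μ :=
    (hgg.const_mul _).mul_const _
  calc 0 ≤ ∫ ω, (t • f ω - c * g ω) * star (t • f ω - c * g ω) ∂μ :=
        integral_nonneg fun ω => mul_star_self_nonneg _
    _ = _ := by
      simp_rw [hexpand]
      rw [integral_add ((h₁.sub' h₂).sub' h₃) h₄, integral_sub (h₁.sub' h₂) h₃,
        integral_sub h₁ h₂, integral_smul, integral_smul, integral_smul,
        integral_mul_const_of_integrable hfg, integral_const_mul_of_integrable hgf, hgf_eq,
        integral_mul_const_of_integrable (hgg.const_mul c), integral_const_mul_of_integrable hgg]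

theorem norm_integral_smul_mul_star_smul_le {m : Ω → ℂ} {x : Ω → A} {K : ℝ}
    (hm : AEStronglyMeasurable m μ) (hK : ∀ᵐ ω ∂μ, ‖m ω‖ ≤ K)
    (hx : Integrable (fun ω => x ω * star (x ω)) μ) :
    ‖∫ ω, (m ω • x ω) * star (m ω • x ω) ∂μ‖ ≤ K ^ 2 * ‖∫ ω, x ω * star (x ω) ∂μ‖ := by
  refine norm_le_mul_norm_of_le_smul (integral_nonneg fun ω => mul_star_self_nonneg _)
    (sq_nonneg K) ?_
  rw [← integral_smul]
  refine integral_mono_ae (integrable_smul_mul_star_smul hm hK hx) (hx.smul _)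
    (hK.mono fun ω hω => ?_)
  dsimp only
  rw [smul_mul_star_smul]
  exact smul_le_smul_of_nonneg_right (pow_le_pow_left₀ (norm_nonneg _) hω 2)
    (mul_star_self_nonneg _)

end CStarAlgebra

theorem le_of_sq_le_mul {c P : ℝ} (hP : 0 ≤ P) (h : c ^ 2 ≤ P * c) : c ≤ P := by
  nlinarith

theorem bessel_multiplier_pointwise_bound_general
    {𝒜 H Ω : Type*}
    -- `𝒜` is a unital C*-algebra
    [NormedRing 𝒜] [StarRing 𝒜] [CStarRing 𝒜] [NormedAlgebra ℂ 𝒜] [CompleteSpace 𝒜]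
    [PartialOrder 𝒜] [StarOrderedRing 𝒜]
    -- `H` is a Hilbert C*-module over `𝒜`
    [NormedAddCommGroup H]
    (inn : H → H → 𝒜)
    (inn_conj_symm : ∀ x y : H, inn x y = star (inn y x))
    (hnorm : ∀ x : H, ‖x‖ = Real.sqrt ‖inn x x‖)
    -- `(Ω, μ)` is a measure space
    [MeasurableSpace Ω] (μ : Measure Ω)
    (X Y : Ω → H)
    -- `(X, X)` and `(Y, Y)` are continuous biframe Bessel mappings with bounds `D₁, D₂`
    (D₂ : ℝ) (hD₂ : 0 < D₂)
    (hYBessel : ∀ f : H, ∫ ω, inn f (Y ω) * inn (Y ω) f ∂μ ≤ D₂ • inn f f)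
    -- `m : Ω → ℂ` is an essentially bounded measurable function
    (m : Ω → ℂ) (hm : AEStronglyMeasurable m μ) (hmbd : eLpNormEssSup m μ ≠ ⊤)
    -- all relevant integrands are Bochner integrable
    (hprodX : ∀ f : H, Integrable (fun ω => inn f (X ω) * inn (X ω) f) μ)
    (hprodY : ∀ f : H, Integrable (fun ω => inn f (Y ω) * inn (Y ω) f) μ)
    (hmint : ∀ f g : H, Integrable (fun ω => m ω • (inn f (X ω) * inn (Y ω) g)) μ)
    -- the continuous biframe Bessel multiplier `M_{m,X,Y}` (weakly defined)
    (M : H → H)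
    (hM : ∀ f g : H, inn (M f) g = ∫ ω, m ω • (inn f (X ω) * inn (Y ω) g) ∂μ) :
    ∀ f : H, ‖M f‖ ≤ (eLpNormEssSup m μ).toReal * Real.sqrt D₂ *
      Real.sqrt ‖∫ ω, inn f (X ω) * inn (X ω) f ∂μ‖ := by
  let _ : CStarAlgebra 𝒜 := CStarAlgebra.ofStarOrderedRing
  intro f
  set K := (eLpNormEssSup m μ).toReal
  have hK0 : 0 ≤ K := ENNReal.toReal_nonneg
  set I := ‖∫ ω, inn f (X ω) * inn (X ω) f ∂μ‖
  have hstar : ∀ x y, star (inn x y) = inn y x := fun x y => (inn_conj_symm y x).symm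
  have hK := ae_norm_le_toReal_eLpNormEssSup hmbd
  have hX : Integrable (fun ω => inn f (X ω) * star (inn f (X ω))) μ := by
    simpa only [hstar] using hprodX f
  have hY : Integrable (fun ω => inn (M f) (Y ω) * star (inn (M f) (Y ω))) μ := by
    simpa only [hstar] using hprodY (M f)
  have hc : inn (M f) (M f) = ∫ ω, (m ω • inn f (X ω)) * star (inn (M f) (Y ω)) ∂μ := by
    rw [hM]
    simp only [hstar, smul_mul_assoc]
  set c := inn (M f) (M f)
  have hCS := norm_integral_mul_star_sq_le
    (by simpa only [hstar, smul_mul_assoc] using hmint f (M f))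
    (integrable_smul_mul_star_smul hm hK hX) hY
  rw [← hc] at hCS
  have hXbound := norm_integral_smul_mul_star_smul_le hm hK hX
  have hYbound : ‖∫ ω, inn (M f) (Y ω) * star (inn (M f) (Y ω)) ∂μ‖ ≤ D₂ * ‖c‖ :=
    norm_le_mul_norm_of_le_smul (integral_nonneg fun _ => mul_star_self_nonneg _) hD₂.le
      (by simpa only [hstar] using hYBessel (M f))
  simp only [hstar] at hXbound
  have hcle : ‖c‖ ≤ K ^ 2 * D₂ * I := le_of_sq_le_mul (by positivity) <|
    (hCS.trans (mul_le_mul hXbound hYbound (norm_nonneg _) (by positivity))).trans_eq (by ring)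
  rw [hnorm, ← Real.sqrt_sq hK0, ← Real.sqrt_mul (sq_nonneg K),
    ← Real.sqrt_mul (by positivity)]
  exact Real.sqrt_le_sqrt hcle

/-- For every `f`,
`‖M_{m,X,Y} f‖ ≤ ‖m‖_∞ · √D₂ · ‖∫ ⟨f, X ω⟩⟨X ω, f⟩ dμ‖^{1/2}`. -/
theorem bessel_multiplier_pointwise_bound
    {𝒜 H Ω : Type*}
    -- `𝒜` is a unital C*-algebra
    [NormedRing 𝒜] [StarRing 𝒜] [CStarRing 𝒜] [NormedAlgebra ℂ 𝒜] [CompleteSpace 𝒜]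
    [PartialOrder 𝒜] [StarOrderedRing 𝒜]
    -- `H` is a Hilbert C*-module over `𝒜`
    [NormedAddCommGroup H] [NormedSpace ℝ H] [CompleteSpace H] [Module 𝒜 H]
    (inn : H → H → 𝒜)
    (inn_add_left : ∀ x y z : H, inn (x + y) z = inn x z + inn y z)
    (inn_smul_left : ∀ (a : 𝒜) (x z : H), inn (a • x) z = a * inn x z)
    (inn_conj_symm : ∀ x y : H, inn x y = star (inn y x))
    (inn_nonneg : ∀ x : H, 0 ≤ inn x x)
    (inn_definite : ∀ x : H, inn x x = 0 → x = 0)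
    (hnorm : ∀ x : H, ‖x‖ = Real.sqrt ‖inn x x‖)
    -- `(Ω, μ)` is a measure space
    [MeasurableSpace Ω] (μ : Measure Ω)
    -- `X, Y : Ω → H` are weakly measurable
    (X Y : Ω → H)
    (hXw : ∀ f : H, AEStronglyMeasurable (fun ω => inn f (X ω)) μ)
    (hYw : ∀ f : H, AEStronglyMeasurable (fun ω => inn f (Y ω)) μ)
    -- `(X, X)` and `(Y, Y)` are continuous biframe Bessel mappings with bounds `D₁, D₂`
    (D₁ D₂ : ℝ) (hD₁ : 0 < D₁) (hD₂ : 0 < D₂)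
    (hXBessel : ∀ f : H, ∫ ω, inn f (X ω) * inn (X ω) f ∂μ ≤ D₁ • inn f f)
    (hYBessel : ∀ f : H, ∫ ω, inn f (Y ω) * inn (Y ω) f ∂μ ≤ D₂ • inn f f)
    -- `m : Ω → ℂ` is an essentially bounded measurable function
    (m : Ω → ℂ) (hm : AEStronglyMeasurable m μ) (hmbd : eLpNormEssSup m μ ≠ ⊤)
    -- all relevant integrands are Bochner integrable
    (hprodX : ∀ f : H, Integrable (fun ω => inn f (X ω) * inn (X ω) f) μ)
    (hprodY : ∀ f : H, Integrable (fun ω => inn f (Y ω) * inn (Y ω) f) μ)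
    (hmint : ∀ f g : H, Integrable (fun ω => m ω • (inn f (X ω) * inn (Y ω) g)) μ)
    -- the continuous biframe Bessel multiplier `M_{m,X,Y}` (weakly defined)
    (M : H → H)
    (hM : ∀ f g : H, inn (M f) g = ∫ ω, m ω • (inn f (X ω) * inn (Y ω) g) ∂μ) :
    ∀ f : H, ‖M f‖ ≤ (eLpNormEssSup m μ).toReal * Real.sqrt D₂ *
      Real.sqrt ‖∫ ω, inn f (X ω) * inn (X ω) f ∂μ‖ :=
  bessel_multiplier_pointwise_bound_general inn inn_conj_symm hnorm μ X Y D₂ hD₂ hYBessel m hm hmbd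
    hprodX hprodY hmint M hM
end
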